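/- Let n ≥ 3 and suppose a_n ≥ 2 and a_{n+1} ≥ 2. Then q_n − q_{n-1} and q_n + q_{n-1} are two successive elements of 𝔛(α). -/

import Mathlib

open Filter Real Set

/-- Iterates of the Gauss map starting from `α`: `x₀ = α`, `x_{n+1} = 1 / fract (xₙ)`. -/
noncomputable def gaussIter (α : ℝ) : ℕ → ℝ
  | 0 => α
  | n + 1 => (Int.fract (gaussIter α n))⁻¹

/-- Partial quotients of the continued fraction `α = [a₀; a₁, a₂, …]`. -/
noncomputable def cfA (α : ℝ) (n : ℕ) : ℤ := ⌊gaussIter α n⌋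

/-- Denominators of convergents, with shifted index: `cfQ α 0 = q₋₁ = 0`,
`cfQ α 1 = q₀ = 1`, and `cfQ α (n+1) = qₙ` where `qₙ = aₙ q_{n-1} + q_{n-2}`. -/
noncomputable def cfQ (α : ℝ) : ℕ → ℤ
  | 0 => 0
  | 1 => 1
  | n + 2 => cfA α (n + 1) * cfQ α (n + 1) + cfQ α n

/-- Numerators of convergents, with shifted index: `cfP α 0 = p₋₁ = 1`,
`cfP α 1 = p₀ = ⌊α⌋`, and `cfP α (n+1) = pₙ` where `pₙ = aₙ p_{n-1} + p_{n-2}`. -/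
noncomputable def cfP (α : ℝ) : ℕ → ℤ
  | 0 => 1
  | 1 => ⌊α⌋
  | n + 2 => cfA α (n + 1) * cfP α (n + 1) + cfP α n

/-- `qₙ`, the denominator of the `n`-th convergent of `α`. -/
noncomputable def cfDen (α : ℝ) (n : ℕ) : ℤ := cfQ α (n + 1)

/-- `pₙ`, the numerator of the `n`-th convergent of `α`. -/
noncomputable def cfNum (α : ℝ) (n : ℕ) : ℤ := cfP α (n + 1)

/-- `ξₙ = |qₙ α − pₙ|`. -/
noncomputable def cfXi (α : ℝ) (n : ℕ) : ℝ := |(cfDen α n : ℝ) * α - (cfNum α n : ℝ)|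

/-- `ψ_α(t) = min { ‖qα‖ : q ∈ ℤ, 1 ≤ q ≤ t }`. -/
noncomputable def psiFn (α t : ℝ) : ℝ :=
  sInf {x : ℝ | ∃ p q : ℤ, 1 ≤ q ∧ (q : ℝ) ≤ t ∧ x = |(q : ℝ) * α - (p : ℝ)|}

/-- `ψ_α^[2](t)`: the same minimum but over pairs `(p,q)` that are not `(pₙ,qₙ)` for any `n ≥ 0`. -/
noncomputable def psi2Fn (α t : ℝ) : ℝ :=
  sInf {x : ℝ | ∃ p q : ℤ, 1 ≤ q ∧ (q : ℝ) ≤ t ∧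
    (∀ n : ℕ, ¬(p = cfNum α n ∧ q = cfDen α n)) ∧ x = |(q : ℝ) * α - (p : ℝ)|}

/-- `ψ_α^[2]*(t)`: the same minimum but over pairs `(p,q)` with `p/q ≠ pₙ/qₙ` for all `n ≥ 0`. -/
noncomputable def psi2sFn (α t : ℝ) : ℝ :=
  sInf {x : ℝ | ∃ p q : ℤ, 1 ≤ q ∧ (q : ℝ) ≤ t ∧
    (∀ n : ℕ, (p : ℝ) / (q : ℝ) ≠ (cfNum α n : ℝ) / (cfDen α n : ℝ)) ∧
    x = |(q : ℝ) * α - (p : ℝ)|}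

/-- `λ(α) = liminf_{t→∞} t · ψ_α(t)`. -/
noncomputable def lamOf (α : ℝ) : ℝ := Filter.liminf (fun t : ℝ => t * psiFn α t) Filter.atTop

/-- `𝔨(α) = liminf_{t→∞} t · ψ_α^[2](t)`. -/
noncomputable def kOf (α : ℝ) : ℝ := Filter.liminf (fun t : ℝ => t * psi2Fn α t) Filter.atTop

/-- `𝔨*(α) = liminf_{t→∞} t · ψ_α^[2]*(t)`. -/
noncomputable def ksOf (α : ℝ) : ℝ := Filter.liminf (fun t : ℝ => t * psi2sFn α t) Filter.atTop

/-- `α` and `β` are equivalent: `β = (aα+b)/(cα+d)` with `a,b,c,d ∈ ℤ`, `|ad − bc| = 1`. -/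
def CFEquiv (α β : ℝ) : Prop :=
  ∃ a b c d : ℤ, |a * d - b * c| = 1 ∧ β = ((a : ℝ) * α + (b : ℝ)) / ((c : ℝ) * α + (d : ℝ))

/-- The spectrum `𝕃₂ = {𝔨(α) : α irrational}`. -/
def L2 : Set ℝ := {x : ℝ | ∃ α : ℝ, Irrational α ∧ kOf α = x}

/-- The spectrum `𝕃₂* = {𝔨*(α) : α irrational}`. -/
def L2s : Set ℝ := {x : ℝ | ∃ α : ℝ, Irrational α ∧ ksOf α = x}

/-- `𝔔(α)`: the set of positive integers at which `ψ_α^[2]` is discontinuous. -/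
def QSet (α : ℝ) : Set ℤ := {m : ℤ | 0 < m ∧ ¬ ContinuousAt (psi2Fn α) (m : ℝ)}

/-- `𝔛(α)`: the set of positive integers at which `ψ_α^[2]*` is discontinuous. -/
def XSet (α : ℝ) : Set ℤ := {m : ℤ | 0 < m ∧ ¬ ContinuousAt (psi2sFn α) (m : ℝ)}

/-- The members of the list `l` are successive elements of `S`: they belong to `S`,
are listed in increasing order, and no element of `S` lies strictly between
consecutive listed ones. -/
def SuccessiveIn (S : Set ℤ) (l : List ℤ) : Prop :=
  (∀ x ∈ l, x ∈ S) ∧ l.Chain' (fun x y => x < y ∧ ∀ z ∈ S, ¬(x < z ∧ z < y))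

/-- `κ¹ₙ = (q_{n-2} + q_{n-1})(ξ_{n-2} − ξ_{n-1})`. -/
noncomputable def kap1 (α : ℝ) (n : ℕ) : ℝ :=
  ((cfDen α (n - 2) + cfDen α (n - 1) : ℤ) : ℝ) * (cfXi α (n - 2) - cfXi α (n - 1))

/-- `κ²ₙ = (qₙ − q_{n-1})(ξ_{n-1} + ξₙ)`. -/
noncomputable def kap2 (α : ℝ) (n : ℕ) : ℝ :=
  ((cfDen α n - cfDen α (n - 1) : ℤ) : ℝ) * (cfXi α (n - 1) + cfXi α n)

/-- `κ³ₙ = (2q_{n-2} + q_{n-1})(2ξ_{n-2} − ξ_{n-1})`. -/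
noncomputable def kap3 (α : ℝ) (n : ℕ) : ℝ :=
  ((2 * cfDen α (n - 2) + cfDen α (n - 1) : ℤ) : ℝ) * (2 * cfXi α (n - 2) - cfXi α (n - 1))

/-- `κ⁴ₙ = 4 q_{n-1} ξ_{n-1}`. -/
noncomputable def kap4 (α : ℝ) (n : ℕ) : ℝ :=
  ((4 * cfDen α (n - 1) : ℤ) : ℝ) * cfXi α (n - 1)

/-!
Write `θₙ = qₙ α - pₙ`, so that `ξₙ = |θₙ|` and consecutive `θₙ` have opposite signs.
Since `(pₙ, qₙ)` and `(pₙ₋₁, qₙ₋₁)` form a basis of `ℤ²`, every `(p, q)` is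
`x (pₙ, qₙ) + y (pₙ₋₁, qₙ₋₁)` and then `qα - p = x θₙ + y θₙ₋₁`. If `0 < q < qₙ + qₙ₋₁` and
`p/q` is not a convergent, then `x y < 0`, hence `|qα - p| = |x| ξₙ + |y| ξₙ₋₁ ≥ ξₙ + ξₙ₋₁`,
and even `≥ 2 ξₙ + ξₙ₋₁` when `q < qₙ - qₙ₋₁`, because then `(x, y) ≠ ±(1, -1)`.
The hypotheses `aₙ ≥ 2`, `aₙ₊₁ ≥ 2` put `qₙ ± qₙ₋₁` strictly between consecutive
denominators, so `(pₙ ± pₙ₋₁, qₙ ± qₙ₋₁)` are admissible for `ψ*`, with values `ξₙ₋₁ + ξₙ` and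
`ξₙ₋₁ - ξₙ`. Thus `ψ*` is constant on `[qₙ - qₙ₋₁, qₙ + qₙ₋₁)` and jumps at both ends.
-/

open Topology

section OrderedRing

variable {R : Type*} [CommRing R] [LinearOrder R] [IsStrictOrderedRing R]

theorem abs_mul_add_mul_eq {x y a b : R} (hxy : x * y < 0) (hab : a * b < 0) :
    |x * a + y * b| = |x| * |a| + |y| * |b| := by
  have hpos : 0 < x * a * (y * b) := by
    have := mul_pos_of_neg_of_neg hxy hab
    linarith [show x * a * (y * b) = x * y * (a * b) by ring]
  rw [← abs_mul, ← abs_mul, abs_add_eq_add_abs_iff]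
  rcases pos_and_pos_or_neg_and_neg_of_mul_pos hpos with h | h
  · exact Or.inl ⟨h.1.le, h.2.le⟩
  · exact Or.inr ⟨h.1.le, h.2.le⟩

theorem abs_add_eq_abs_sub_abs_of_mul_neg {a b : R} (hab : a * b < 0) (hlt : |a| < |b|) :
    |a + b| = |b| - |a| := by
  rcases lt_or_gt_of_ne (left_ne_zero_of_mul hab.ne) with ha | ha
  · have hb : 0 < b := by nlinarith
    rw [abs_of_neg ha, abs_of_pos hb] at hlt ⊢
    rw [abs_of_pos (by linarith)]
    ring
  · have hb : b < 0 := by nlinarith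
    rw [abs_of_pos ha, abs_of_neg hb] at hlt ⊢
    rw [abs_of_neg (by linarith)]
    ring

end OrderedRing

theorem not_continuousAt_of_forall_Ioo {f : ℝ → ℝ} {a x ε : ℝ} (hax : a < x) (hε : 0 < ε)
    (h : ∀ t ∈ Ioo a x, ε ≤ |f t - f x|) : ¬ContinuousAt f x := by
  intro hf
  have hnear : ∀ᶠ t in 𝓝[<] x, dist (f t) (f x) < ε :=
    Metric.tendsto_nhds.1 (hf.mono_left nhdsWithin_le_nhds) ε hε
  have hleft : ∀ᶠ t in 𝓝[<] x, t ∈ Ioo a x := Ioo_mem_nhdsLT hax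
  obtain ⟨t, hdist, ht⟩ := (hnear.and hleft).exists
  exact (h t ht).not_gt hdist

section ContinuedFraction

variable {α : ℝ}

theorem irrational_gaussIter (hα : Irrational α) : ∀ k, Irrational (gaussIter α k)
  | 0 => hα
  | k + 1 => ((irrational_gaussIter hα k).sub_intCast _).inv

theorem fract_gaussIter_pos (hα : Irrational α) (k : ℕ) : 0 < Int.fract (gaussIter α k) :=
  Int.fract_pos.2 ((irrational_gaussIter hα k).ne_int _)

theorem one_le_cfA_succ (hα : Irrational α) (k : ℕ) : 1 ≤ cfA α (k + 1) := by
  have : 1 < gaussIter α (k + 1) :=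
    one_lt_inv_iff₀.2 ⟨fract_gaussIter_pos hα k, Int.fract_lt_one _⟩
  exact Int.le_floor.2 (by exact_mod_cast this.le)

theorem cfQ_nonneg (hα : Irrational α) : ∀ k, 0 ≤ cfQ α k
  | 0 => le_rfl
  | 1 => zero_le_one
  | k + 2 => by
    have := one_le_cfA_succ hα k
    have := cfQ_nonneg hα (k + 1)
    have := cfQ_nonneg hα k
    show 0 ≤ cfA α (k + 1) * cfQ α (k + 1) + cfQ α k
    positivity

theorem cfQ_mono (hα : Irrational α) : Monotone (cfQ α) := by
  refine monotone_nat_of_le_succ fun k => ?_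
  cases k with
  | zero => exact zero_le_one
  | succ k =>
    have := one_le_cfA_succ hα k
    have := cfQ_nonneg hα (k + 1)
    have := cfQ_nonneg hα k
    show cfQ α (k + 1) ≤ cfA α (k + 1) * cfQ α (k + 1) + cfQ α k
    nlinarith

theorem one_le_cfQ_succ (hα : Irrational α) (k : ℕ) : 1 ≤ cfQ α (k + 1) :=
  cfQ_mono hα (Nat.le_add_left 1 k)

theorem cfP_succ_mul_cfQ_sub_cfP_mul_cfQ_succ :
    ∀ k, cfP α (k + 1) * cfQ α k - cfP α k * cfQ α (k + 1) = (-1) ^ (k + 1)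
  | 0 => by simp [cfP, cfQ]
  | k + 1 => by
    have ih := cfP_succ_mul_cfQ_sub_cfP_mul_cfQ_succ k
    show (cfA α (k + 1) * cfP α (k + 1) + cfP α k) * cfQ α (k + 1)
      - cfP α (k + 1) * (cfA α (k + 1) * cfQ α (k + 1) + cfQ α k) = (-1) ^ (k + 2)
    linear_combination (-1 : ℤ) * ih

theorem isCoprime_cfP_add_mul (k : ℕ) (s : ℤ) :
    IsCoprime (cfP α (k + 1) + s * cfP α k) (cfQ α (k + 1) + s * cfQ α k) := by
  refine ⟨(-1) ^ (k + 1) * cfQ α k, -(-1) ^ (k + 1) * cfP α k, ?_⟩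
  have hsq : ((-1 : ℤ) ^ (k + 1)) ^ 2 = 1 := by rw [← pow_mul, pow_mul']; simp
  linear_combination (-1 : ℤ) ^ (k + 1) * cfP_succ_mul_cfQ_sub_cfP_mul_cfQ_succ k + hsq

theorem exists_eq_mul_cfP_add_mul_cfP (k : ℕ) (p q : ℤ) : ∃ x y : ℤ,
    p = x * cfP α (k + 1) + y * cfP α k ∧ q = x * cfQ α (k + 1) + y * cfQ α k := by
  set e : ℤ := (-1) ^ (k + 1)
  have hdet := cfP_succ_mul_cfQ_sub_cfP_mul_cfQ_succ (α := α) k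
  have hsq : e * e = 1 := by rw [← pow_two, ← pow_mul, pow_mul']; simp
  refine ⟨e * (cfQ α k * p - cfP α k * q), e * (cfP α (k + 1) * q - cfQ α (k + 1) * p), ?_, ?_⟩
  · linear_combination (-e * p) * hdet - p * hsq
  · linear_combination (-e * q) * hdet - q * hsq

/-- `cfRem α k = θₖ₋₁ = qₖ₋₁ α - pₖ₋₁`, indexed like `cfQ` and `cfP`. -/
noncomputable def cfRem (α : ℝ) (k : ℕ) : ℝ := cfQ α k * α - cfP α k

theorem cfRem_succ (hα : Irrational α) :
    ∀ k, cfRem α (k + 1) = -cfRem α k * Int.fract (gaussIter α k)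
  | 0 => by
    show cfRem α 1 = -cfRem α 0 * (α - ⌊α⌋)
    simp [cfRem, cfQ, cfP]
  | k + 1 => by
    have hf := (fract_gaussIter_pos hα k).ne'
    have hfract : Int.fract (gaussIter α (k + 1))
        = (Int.fract (gaussIter α k))⁻¹ - cfA α (k + 1) := rfl
    have hrec : cfRem α (k + 2) = cfA α (k + 1) * cfRem α (k + 1) + cfRem α k := by
      simp only [cfRem, cfQ, cfP]
      push_cast
      ring
    rw [hrec, hfract, cfRem_succ hα k]
    field_simp
    ring

theorem cfRem_ne_zero (hα : Irrational α) : ∀ k, cfRem α k ≠ 0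
  | 0 => by simp [cfRem, cfQ, cfP]
  | k + 1 => by
    rw [cfRem_succ hα]
    exact mul_ne_zero (neg_ne_zero.2 (cfRem_ne_zero hα k)) (fract_gaussIter_pos hα k).ne'

theorem cfRem_succ_mul_cfRem_neg (hα : Irrational α) (k : ℕ) :
    cfRem α (k + 1) * cfRem α k < 0 := by
  have h := mul_pos (mul_self_pos.2 (cfRem_ne_zero hα k)) (fract_gaussIter_pos hα k)
  rw [cfRem_succ hα]
  linarith

theorem abs_cfRem_succ_lt (hα : Irrational α) (k : ℕ) : |cfRem α (k + 1)| < |cfRem α k| := by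
  rw [cfRem_succ hα, abs_mul, abs_neg, abs_of_pos (fract_gaussIter_pos hα k)]
  exact mul_lt_of_lt_one_right (abs_pos.2 (cfRem_ne_zero hα k)) (Int.fract_lt_one _)

theorem cfXi_pos (hα : Irrational α) (n : ℕ) : 0 < cfXi α n :=
  abs_pos.2 (cfRem_ne_zero hα (n + 1))

theorem cfXi_succ_lt (hα : Irrational α) (n : ℕ) : cfXi α (n + 1) < cfXi α n :=
  abs_cfRem_succ_lt hα (n + 1)

theorem one_le_cfDen (hα : Irrational α) (n : ℕ) : 1 ≤ cfDen α n :=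
  one_le_cfQ_succ hα n

theorem cfDen_mono (hα : Irrational α) : Monotone (cfDen α) :=
  fun _ _ h => cfQ_mono hα (Nat.succ_le_succ h)

theorem cfDen_lt_cfDen_succ_sub (hα : Irrational α) {k : ℕ} (hk : 0 < k)
    (ha : 2 ≤ cfA α (k + 1)) : cfDen α k < cfDen α (k + 1) - cfDen α k := by
  obtain ⟨j, rfl⟩ : ∃ j, k = j + 1 := ⟨k - 1, by omega⟩
  have hrec : cfDen α (j + 2) = cfA α (j + 2) * cfDen α (j + 1) + cfDen α j := rfl
  nlinarith [one_le_cfDen hα j, one_le_cfDen hα (j + 1)]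

theorem cfDen_add_lt_cfDen_add_two (hα : Irrational α) {k : ℕ} (ha' : 2 ≤ cfA α (k + 2)) :
    cfDen α (k + 1) + cfDen α k < cfDen α (k + 2) := by
  have hrec : cfDen α (k + 2) = cfA α (k + 2) * cfDen α (k + 1) + cfDen α k := rfl
  nlinarith [one_le_cfDen hα (k + 1)]

theorem ne_cfDen_of_lt_of_lt (hα : Irrational α) {k : ℕ} {q : ℤ} (hlo : cfDen α k < q)
    (hhi : q < cfDen α (k + 1)) (n : ℕ) : q ≠ cfDen α n := by
  rintro rfl
  rcases le_or_gt n k with h | h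
  · exact (cfDen_mono hα h).not_gt hlo
  · exact (cfDen_mono hα h).not_gt hhi

end ContinuedFraction

def IsNonconvergent (α : ℝ) (p q : ℤ) : Prop :=
  ∀ n : ℕ, (p : ℝ) / (q : ℝ) ≠ (cfNum α n : ℝ) / (cfDen α n : ℝ)

section Approximation

variable {α : ℝ} {k : ℕ}

theorem isCoprime_cfNum_cfDen (n : ℕ) : IsCoprime (cfNum α n) (cfDen α n) := by
  have h := isCoprime_cfP_add_mul (α := α) n 0
  simp only [zero_mul, add_zero] at h
  exact h

theorem isNonconvergent_of_isCoprime (hα : Irrational α) {p q : ℤ} (hq : 0 < q)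
    (hcop : IsCoprime p q) (hden : ∀ n, q ≠ cfDen α n) : IsNonconvergent α p q := by
  intro n h
  have hℚ : (p : ℚ) / q = (cfNum α n : ℚ) / cfDen α n := by exact_mod_cast h
  exact hden n (Rat.div_int_inj hq (by linarith [one_le_cfDen hα n])
    (Int.isCoprime_iff_gcd_eq_one.1 hcop)
    (Int.isCoprime_iff_gcd_eq_one.1 (isCoprime_cfNum_cfDen n)) hℚ).2

theorem not_isNonconvergent_mul {y : ℤ} (hy : y ≠ 0) (n : ℕ) :
    ¬IsNonconvergent α (y * cfNum α n) (y * cfDen α n) := fun h => h n (by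
  push_cast
  exact mul_div_mul_left _ _ (Int.cast_ne_zero.2 hy))

theorem cfDen_mul_sub_cfNum (x y : ℤ) :
    (((x * cfDen α (k + 1) + y * cfDen α k : ℤ) : ℝ) * α
      - ((x * cfNum α (k + 1) + y * cfNum α k : ℤ) : ℝ))
      = x * cfRem α (k + 2) + y * cfRem α (k + 1) := by
  simp only [cfDen, cfNum, cfRem]
  push_cast
  ring

theorem exists_abs_eq_of_lt_cfDen_add (hα : Irrational α) {p q : ℤ} (hq : 0 < q)
    (hqk : q < cfDen α (k + 1) + cfDen α k) (hpq : IsNonconvergent α p q) :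
    ∃ x y : ℤ, x * y < 0 ∧ q = x * cfDen α (k + 1) + y * cfDen α k ∧
      |(q : ℝ) * α - p| = |x| * cfXi α (k + 1) + |y| * cfXi α k := by
  obtain ⟨x, y, hp, hq'⟩ := exists_eq_mul_cfP_add_mul_cfP (α := α) (k + 1) p q
  obtain rfl : p = x * cfNum α (k + 1) + y * cfNum α k := hp
  obtain rfl : q = x * cfDen α (k + 1) + y * cfDen α k := hq'
  have hx : x ≠ 0 := by
    rintro rfl
    simp only [zero_mul, zero_add] at hpq hq
    exact not_isNonconvergent_mul (by rintro rfl; simp at hq) k hpq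
  have hy : y ≠ 0 := by
    rintro rfl
    simp only [zero_mul, add_zero] at hpq hq
    exact not_isNonconvergent_mul (by rintro rfl; simp at hq) (k + 1) hpq
  have h1 := one_le_cfDen hα k
  have h2 := one_le_cfDen hα (k + 1)
  have hxy : x * y < 0 := by
    rcases lt_or_gt_of_ne hx with hx | hx <;> rcases lt_or_gt_of_ne hy with hy | hy <;> nlinarith
  refine ⟨x, y, hxy, rfl, ?_⟩
  rw [cfDen_mul_sub_cfNum, abs_mul_add_mul_eq (by exact_mod_cast hxy)
    (cfRem_succ_mul_cfRem_neg hα (k + 1)), Int.cast_abs, Int.cast_abs]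
  rfl

theorem cfXi_add_le_abs (hα : Irrational α) {p q : ℤ} (hq : 0 < q)
    (hqk : q < cfDen α (k + 1) + cfDen α k) (hpq : IsNonconvergent α p q) :
    cfXi α (k + 1) + cfXi α k ≤ |(q : ℝ) * α - p| := by
  obtain ⟨x, y, hxy, -, habs⟩ := exists_abs_eq_of_lt_cfDen_add hα hq hqk hpq
  have hx : (1 : ℝ) ≤ |x| := by exact_mod_cast Int.one_le_abs (left_ne_zero_of_mul hxy.ne)
  have hy : (1 : ℝ) ≤ |y| := by exact_mod_cast Int.one_le_abs (right_ne_zero_of_mul hxy.ne)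
  rw [habs]
  nlinarith [cfXi_pos hα k, cfXi_pos hα (k + 1)]

theorem two_mul_cfXi_add_le_abs (hα : Irrational α) {p q : ℤ} (hq : 0 < q)
    (hqk : q < cfDen α (k + 1) - cfDen α k) (hpq : IsNonconvergent α p q) :
    2 * cfXi α (k + 1) + cfXi α k ≤ |(q : ℝ) * α - p| := by
  have hmono := cfDen_mono hα (Nat.le_succ k)
  have h1 := one_le_cfDen hα k
  obtain ⟨x, y, hxy, rfl, habs⟩ := exists_abs_eq_of_lt_cfDen_add (k := k) hα hq (by omega) hpq
  have hx : 1 ≤ |x| := Int.one_le_abs (left_ne_zero_of_mul hxy.ne)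
  have hy : 1 ≤ |y| := Int.one_le_abs (right_ne_zero_of_mul hxy.ne)
  -- `0 < q < qₖ₊₁ - qₖ` rules out `(x, y) = ±(1, -1)`
  have htwo : 2 ≤ |x| ∨ 2 ≤ |y| := by
    by_contra! h
    rcases abs_eq (zero_le_one' ℤ) |>.1 (by omega : |x| = 1) with rfl | rfl <;>
      rcases abs_eq (zero_le_one' ℤ) |>.1 (by omega : |y| = 1) with rfl | rfl <;> omega
  have hx' : (1 : ℝ) ≤ |x| := by exact_mod_cast hx
  have hy' : (1 : ℝ) ≤ |y| := by exact_mod_cast hy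
  have hξ := cfXi_pos hα (k + 1)
  have hlt := cfXi_succ_lt hα k
  rw [habs]
  rcases htwo with h | h
  · have h' : (2 : ℝ) ≤ |x| := by exact_mod_cast h
    nlinarith
  · have h' : (2 : ℝ) ≤ |y| := by exact_mod_cast h
    nlinarith

theorem isNonconvergent_cfNum_sub (hα : Irrational α) (hk : 0 < k) (ha : 2 ≤ cfA α (k + 1)) :
    IsNonconvergent α (cfNum α (k + 1) - cfNum α k) (cfDen α (k + 1) - cfDen α k) := by
  have hlt := cfDen_lt_cfDen_succ_sub hα hk ha
  refine isNonconvergent_of_isCoprime hα (by linarith [one_le_cfDen hα k]) ?_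
    (ne_cfDen_of_lt_of_lt hα hlt (by linarith [one_le_cfDen hα k]))
  have h := isCoprime_cfP_add_mul (α := α) (k + 1) (-1)
  simp only [neg_one_mul, ← sub_eq_add_neg] at h
  exact h

theorem isNonconvergent_cfNum_add (hα : Irrational α) (ha' : 2 ≤ cfA α (k + 2)) :
    IsNonconvergent α (cfNum α (k + 1) + cfNum α k) (cfDen α (k + 1) + cfDen α k) := by
  have h1 := one_le_cfDen hα k
  refine isNonconvergent_of_isCoprime hα (by linarith [one_le_cfDen hα (k + 1)]) ?_
    (ne_cfDen_of_lt_of_lt hα (by linarith) (cfDen_add_lt_cfDen_add_two hα ha'))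
  have h := isCoprime_cfP_add_mul (α := α) (k + 1) 1
  simp only [one_mul] at h
  exact h

theorem abs_cfDen_sub_mul_sub_cfNum_sub (hα : Irrational α) :
    |((cfDen α (k + 1) - cfDen α k : ℤ) : ℝ) * α - ((cfNum α (k + 1) - cfNum α k : ℤ) : ℝ)|
      = cfXi α (k + 1) + cfXi α k := by
  rw [show cfDen α (k + 1) - cfDen α k = 1 * cfDen α (k + 1) + -1 * cfDen α k by ring,
    show cfNum α (k + 1) - cfNum α k = 1 * cfNum α (k + 1) + -1 * cfNum α k by ring,
    cfDen_mul_sub_cfNum, abs_mul_add_mul_eq (by norm_num) (cfRem_succ_mul_cfRem_neg hα (k + 1))]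
  simp [cfXi, cfRem, cfDen, cfNum]

theorem abs_cfDen_add_mul_sub_cfNum_add (hα : Irrational α) :
    |((cfDen α (k + 1) + cfDen α k : ℤ) : ℝ) * α - ((cfNum α (k + 1) + cfNum α k : ℤ) : ℝ)|
      = cfXi α k - cfXi α (k + 1) := by
  rw [show cfDen α (k + 1) + cfDen α k = 1 * cfDen α (k + 1) + 1 * cfDen α k by ring,
    show cfNum α (k + 1) + cfNum α k = 1 * cfNum α (k + 1) + 1 * cfNum α k by ring,
    cfDen_mul_sub_cfNum, Int.cast_one, one_mul, one_mul,
    abs_add_eq_abs_sub_abs_of_mul_neg (cfRem_succ_mul_cfRem_neg hα (k + 1))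
      (abs_cfRem_succ_lt hα (k + 1))]
  rfl

end Approximation

section Psi

variable {α : ℝ} {k : ℕ}

theorem psi2sFn_le {t : ℝ} {p q : ℤ} (hq : 1 ≤ q) (ht : (q : ℝ) ≤ t)
    (hpq : IsNonconvergent α p q) : psi2sFn α t ≤ |(q : ℝ) * α - p| :=
  csInf_le ⟨0, by rintro _ ⟨p, q, -, -, -, rfl⟩; exact abs_nonneg _⟩ ⟨p, q, hq, ht, hpq, rfl⟩

theorem psi2sFn_eq_zero_or_le {t c : ℝ} (h : ∀ p q : ℤ, 1 ≤ q → (q : ℝ) ≤ t →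
    IsNonconvergent α p q → c ≤ |(q : ℝ) * α - p|) : psi2sFn α t = 0 ∨ c ≤ psi2sFn α t := by
  by_cases hne : ∃ p q : ℤ, 1 ≤ q ∧ (q : ℝ) ≤ t ∧ IsNonconvergent α p q
  · obtain ⟨p, q, hq, ht, hpq⟩ := hne
    refine Or.inr (le_csInf ⟨_, p, q, hq, ht, hpq, rfl⟩ ?_)
    rintro _ ⟨p, q, hq, ht, hpq, rfl⟩
    exact h p q hq ht hpq
  · refine Or.inl ?_
    show sInf _ = _
    convert Real.sInf_empty
    refine eq_empty_of_forall_notMem ?_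
    rintro _ ⟨p, q, hq, ht, hpq, -⟩
    exact hne ⟨p, q, hq, ht, hpq⟩

theorem psi2sFn_eqOn_Ico (hα : Irrational α) (hk : 0 < k) (ha : 2 ≤ cfA α (k + 1)) :
    EqOn (psi2sFn α) (fun _ => cfXi α (k + 1) + cfXi α k)
      (Ico ((cfDen α (k + 1) - cfDen α k : ℤ) : ℝ) ((cfDen α (k + 1) + cfDen α k : ℤ) : ℝ)) := by
  rintro t ⟨hlo, hhi⟩
  have hq : 1 ≤ cfDen α (k + 1) - cfDen α k := by
    linarith [cfDen_lt_cfDen_succ_sub hα hk ha, one_le_cfDen hα k]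
  refine IsLeast.csInf_eq ⟨⟨_, _, hq, hlo, isNonconvergent_cfNum_sub hα hk ha,
    (abs_cfDen_sub_mul_sub_cfNum_sub hα).symm⟩, ?_⟩
  rintro _ ⟨p, q, hq, hqt, hpq, rfl⟩
  exact cfXi_add_le_abs hα hq (by exact_mod_cast hqt.trans_lt hhi) hpq

theorem psi2sFn_eq_zero_or_le_of_lt (hα : Irrational α) {t : ℝ}
    (ht : t < ((cfDen α (k + 1) - cfDen α k : ℤ) : ℝ)) :
    psi2sFn α t = 0 ∨ 2 * cfXi α (k + 1) + cfXi α k ≤ psi2sFn α t :=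
  psi2sFn_eq_zero_or_le fun _ _ hq hqt hpq =>
    two_mul_cfXi_add_le_abs hα hq (by exact_mod_cast hqt.trans_lt ht) hpq

theorem psi2sFn_cfDen_add_le (hα : Irrational α) (ha' : 2 ≤ cfA α (k + 2)) :
    psi2sFn α ((cfDen α (k + 1) + cfDen α k : ℤ) : ℝ) ≤ cfXi α k - cfXi α (k + 1) := by
  rw [← abs_cfDen_add_mul_sub_cfNum_add hα]
  exact psi2sFn_le (by linarith [one_le_cfDen hα k, one_le_cfDen hα (k + 1)]) le_rfl
    (isNonconvergent_cfNum_add hα ha')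

theorem cfDen_sub_mem_XSet (hα : Irrational α) (hk : 0 < k) (ha : 2 ≤ cfA α (k + 1)) :
    cfDen α (k + 1) - cfDen α k ∈ XSet α := by
  have hlt := cfDen_lt_cfDen_succ_sub hα hk ha
  have h1 := one_le_cfDen hα k
  refine ⟨by omega, not_continuousAt_of_forall_Ioo (sub_one_lt _) (cfXi_pos hα (k + 1))
    fun t ht => ?_⟩
  rw [psi2sFn_eqOn_Ico hα hk ha ⟨le_rfl, by exact_mod_cast (by omega : _ < _)⟩]
  have hξ := cfXi_pos hα k
  rcases psi2sFn_eq_zero_or_le_of_lt hα ht.2 with h | h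
  · exact le_abs.2 (Or.inr (by linarith))
  · exact le_abs.2 (Or.inl (by linarith))

theorem cfDen_add_mem_XSet (hα : Irrational α) (hk : 0 < k) (ha : 2 ≤ cfA α (k + 1))
    (ha' : 2 ≤ cfA α (k + 2)) : cfDen α (k + 1) + cfDen α k ∈ XSet α := by
  have h1 := one_le_cfDen hα k
  have hξ := cfXi_pos hα (k + 1)
  have hle := psi2sFn_cfDen_add_le hα ha'
  refine ⟨by linarith [one_le_cfDen hα (k + 1)], not_continuousAt_of_forall_Ioo
    (Int.cast_lt.2 (by omega : cfDen α (k + 1) - cfDen α k < cfDen α (k + 1) + cfDen α k))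
    (by positivity : 0 < 2 * cfXi α (k + 1)) fun t ht => ?_⟩
  rw [psi2sFn_eqOn_Ico hα hk ha (Ioo_subset_Ico_self ht)]
  exact le_abs.2 (Or.inl (by linarith))

end Psi

theorem stmt17_general (α : ℝ) (hα : Irrational α)
    (n : ℕ) (hn : 3 ≤ n) (ha : 2 ≤ cfA α n) (ha' : 2 ≤ cfA α (n + 1)) :
    SuccessiveIn (XSet α)
      [cfDen α n - cfDen α (n - 1), cfDen α n + cfDen α (n - 1)] := by
  obtain ⟨k, rfl⟩ : ∃ k, n = k + 1 := ⟨n - 1, by omega⟩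
  have hk : 0 < k := by omega
  rw [Nat.add_sub_cancel]
  have hm := cfDen_sub_mem_XSet hα hk ha
  have hM := cfDen_add_mem_XSet hα hk ha ha'
  refine ⟨by simp [hm, hM], List.isChain_pair.2 ⟨by linarith [one_le_cfDen hα k], ?_⟩⟩
  rintro z hz ⟨hmz, hzM⟩
  have hconst := (psi2sFn_eqOn_Ico hα hk ha).eventuallyEq_of_mem
    (Ico_mem_nhds (Int.cast_lt.2 hmz) (Int.cast_lt.2 hzM))
  exact hz.2 (continuousAt_const.congr hconst.symm)

/-- Let `α ∈ (0,1)` be irrational, `n ≥ 3`, `aₙ ≥ 2` and `a_{n+1} ≥ 2`.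
Then `qₙ − q_{n-1}` and `qₙ + q_{n-1}` are two successive elements of `𝔛(α)`. -/
theorem stmt17 (α : ℝ) (hα : Irrational α) (h0 : 0 < α) (h1 : α < 1)
    (n : ℕ) (hn : 3 ≤ n) (ha : 2 ≤ cfA α n) (ha' : 2 ≤ cfA α (n + 1)) :
    SuccessiveIn (XSet α)
      [cfDen α n - cfDen α (n - 1), cfDen α n + cfDen α (n - 1)] :=
  stmt17_general α hα n hn ha ha'
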